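/- arXiv:2510.16336 — 2 statements merged into one kernel-verified Lean document; each statement's English description precedes it below -/
import Mathlib

section
/- Let H = F₁ ∪ F₂ ∪ ... ∪ F_k be a spanning subgraph of a graph G, where each F_i is a spanning forest of G \ (F₁ ∪ ... ∪ F_{i-1}) (i.e., each F_i is a maximal spanning forest of the remaining edges). Then for every cut (S, V\S), the number of edges of H crossing the cut is at least min(k, the number of edges of G crossing the cut). In particular, G is k-edge-connected if and only if H is k-edge-connected. -/
open Finset
open scoped Classical

/-- Number of edges of `G` crossing the cut `(S, V \ S)`. -/
noncomputable def cutSize {V : Type*} [Fintype V] [DecidableEq V]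
    (G : SimpleGraph V) (S : Finset V) : ℕ :=
  ((S ×ˢ Sᶜ).filter fun p => G.Adj p.1 p.2).card

/-- `G` is `k`-edge-connected: it is connected and every proper nonempty cut has at
least `k` crossing edges. -/
def IsKEdgeConnected {V : Type*} [Fintype V] [DecidableEq V]
    (k : ℕ) (G : SimpleGraph V) : Prop :=
  G.Connected ∧ ∀ S : Finset V, S.Nonempty → S ≠ Finset.univ → k ≤ cutSize G S

/-- `F` is a spanning forest of `G`: a maximal acyclic subgraph of `G`. -/
def IsSpanningForestOf {V : Type*} (F G : SimpleGraph V) : Prop :=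
  F ≤ G ∧ F.IsAcyclic ∧ ∀ F' : SimpleGraph V, F ≤ F' → F' ≤ G → F'.IsAcyclic → F' = F

/-!
A spanning forest of a graph has the same connected components as the graph, so it crosses
every cut the graph crosses. Hence the forest `Fᵢ` of `G \ (F₁ ∪ ⋯ ∪ Fᵢ₋₁)` either adds a new
crossing edge to a cut `S`, or the earlier forests already contain every edge of `G` crossing `S`.
Induction on `i` gives `min(i, cut_G S) ≤ cut_{F₁ ∪ ⋯ ∪ Fᵢ} S`.
-/

open SimpleGraph

section Forest

variable {V : Type*} {F G : SimpleGraph V}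

lemma IsSpanningForestOf.maximal (h : IsSpanningForestOf F G) :
    Maximal (fun H ↦ H ≤ G ∧ H.IsAcyclic) F :=
  ⟨⟨h.1, h.2.1⟩, fun F' hF' hle ↦ (h.2.2 F' hle hF'.1 hF'.2).le⟩

lemma IsSpanningForestOf.reachable_eq (h : IsSpanningForestOf F G) :
    F.Reachable = G.Reachable :=
  reachable_eq_of_maximal_isAcyclic F h.maximal

lemma IsSpanningForestOf.connected_iff (h : IsSpanningForestOf F G) :
    F.Connected ↔ G.Connected := by
  rw [SimpleGraph.connected_iff, SimpleGraph.connected_iff, preconnected_iff_reachable_eq_top,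
    preconnected_iff_reachable_eq_top, h.reachable_eq]

end Forest

lemma iSup_fin_lt_succ {α : Type*} [CompleteLattice α] {k : ℕ} (F : Fin k → α) {n : ℕ}
    (hn : n < k) : ⨆ j : Fin k, ⨆ _ : (j : ℕ) < n + 1, F j =
      (⨆ j : Fin k, ⨆ _ : (j : ℕ) < n, F j) ⊔ F ⟨n, hn⟩ := by
  refine le_antisymm (iSup₂_le fun j hj ↦ ?_) <|
    sup_le (iSup₂_mono' fun j hj ↦ ⟨j, by omega, le_rfl⟩)
      (le_iSup₂_of_le (⟨n, hn⟩ : Fin k) (Nat.lt_succ_self n) le_rfl)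
  rcases Nat.lt_succ_iff_lt_or_eq.mp hj with hj | rfl
  · exact le_sup_of_le_left (le_iSup₂_of_le j hj le_rfl)
  · exact le_sup_of_le_right le_rfl

section Cut

variable {V : Type*} [Fintype V] [DecidableEq V]

lemma cutSize_pos_iff {G : SimpleGraph V} {S : Finset V} :
    0 < cutSize G S ↔ ∃ u ∈ S, ∃ v ∉ S, G.Adj u v := by
  simp [cutSize, Finset.card_pos, Finset.filter_nonempty_iff, and_assoc]

lemma cutSize_mono {G₁ G₂ : SimpleGraph V} (h : G₁ ≤ G₂) (S : Finset V) :
    cutSize G₁ S ≤ cutSize G₂ S :=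
  Finset.card_le_card (Finset.monotone_filter_right _ fun _ _ hp ↦ h hp)

lemma cutSize_sup_of_disjoint {G₁ G₂ : SimpleGraph V} (h : Disjoint G₁ G₂) (S : Finset V) :
    cutSize (G₁ ⊔ G₂) S = cutSize G₁ S + cutSize G₂ S := by
  rw [cutSize, cutSize, cutSize, ← Finset.card_union_of_disjoint, ← Finset.filter_or]
  · simp only [sup_adj]
  · rw [Finset.disjoint_filter]
    exact fun p _ ↦ SimpleGraph.disjoint_left.mp h p.1 p.2

lemma cutSize_le_add_sdiff (G U : SimpleGraph V) (S : Finset V) :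
    cutSize G S ≤ cutSize U S + cutSize (G \ U) S :=
  calc cutSize G S ≤ cutSize (U ⊔ G \ U) S := cutSize_mono le_sup_sdiff S
    _ = cutSize U S + cutSize (G \ U) S := cutSize_sup_of_disjoint disjoint_sdiff_self_right S

lemma IsSpanningForestOf.cutSize_pos {F G : SimpleGraph V} (h : IsSpanningForestOf F G)
    {S : Finset V} (hG : 0 < cutSize G S) : 0 < cutSize F S := by
  obtain ⟨u, hu, v, hv, huv⟩ := cutSize_pos_iff.mp hG
  obtain ⟨p⟩ : F.Reachable u v := h.reachable_eq ▸ huv.reachable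
  obtain ⟨d, -, hd₁, hd₂⟩ := p.exists_boundary_dart S hu hv
  exact cutSize_pos_iff.mpr ⟨_, hd₁, _, hd₂, d.adj⟩

lemma IsKEdgeConnected.mono {k : ℕ} {G₁ G₂ : SimpleGraph V} (h : G₁ ≤ G₂)
    (h₁ : IsKEdgeConnected k G₁) : IsKEdgeConnected k G₂ :=
  ⟨h₁.1.mono h, fun S hS hSu ↦ (h₁.2 S hS hSu).trans (cutSize_mono h S)⟩

lemma min_succ_cutSize_le_cutSize_sup {G U F : SimpleGraph V} (hF : IsSpanningForestOf F (G \ U))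
    {n : ℕ} {S : Finset V} (hU : min n (cutSize G S) ≤ cutSize U S) :
    min (n + 1) (cutSize G S) ≤ cutSize (U ⊔ F) S := by
  rw [cutSize_sup_of_disjoint (disjoint_sdiff_self_right.mono_right hF.1)]
  have hG := cutSize_le_add_sdiff G U S
  have hFpos := fun h ↦ hF.cutSize_pos (S := S) h
  omega

lemma min_cutSize_le_cutSize_iSup {G : SimpleGraph V} {k : ℕ} {F : Fin k → SimpleGraph V}
    (hF : ∀ i : Fin k, IsSpanningForestOf (F i) (G \ ⨆ j : Fin k, ⨆ _ : j < i, F j))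
    (S : Finset V) : min k (cutSize G S) ≤ cutSize (⨆ i, F i) S := by
  suffices ∀ n ≤ k, min n (cutSize G S) ≤ cutSize (⨆ j : Fin k, ⨆ _ : (j : ℕ) < n, F j) S by
    simpa using this k le_rfl
  intro n hn
  induction n with
  | zero => simp
  | succ n ih =>
    rw [iSup_fin_lt_succ F hn]
    exact min_succ_cutSize_le_cutSize_sup (hF ⟨n, hn⟩) (ih (by omega))

end Cut

theorem stmt_4_general {V : Type*} [Fintype V] [DecidableEq V]
    (G : SimpleGraph V) (k : ℕ) (hk : 1 ≤ k) (F : Fin k → SimpleGraph V)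
    (hF : ∀ i : Fin k,
      IsSpanningForestOf (F i) (G \ (⨆ j : Fin k, ⨆ _ : j < i, F j)))
    (H : SimpleGraph V) (hH : H = ⨆ i, F i) :
    (∀ S : Finset V, min k (cutSize G S) ≤ cutSize H S) ∧
      (IsKEdgeConnected k G ↔ IsKEdgeConnected k H) := by
  subst hH
  have hHG : ⨆ i, F i ≤ G := iSup_le fun i ↦ (hF i).1.trans sdiff_le
  have hcut := min_cutSize_le_cutSize_iSup hF
  refine ⟨hcut, fun hG ↦ ⟨?_, fun S hS hSu ↦ ?_⟩, IsKEdgeConnected.mono hHG⟩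
  · have hF₀ : IsSpanningForestOf (F ⟨0, hk⟩) G := by simpa [Fin.lt_def] using hF ⟨0, hk⟩
    exact (hF₀.connected_iff.mpr hG.1).mono (le_iSup F _)
  · exact (le_min le_rfl (hG.2 S hS hSu)).trans (hcut S)

/-- Nagamochi–Ibaraki: if `H = F₁ ∪ ⋯ ∪ F_k` where each `Fᵢ` is a spanning forest of
`G` minus the previous forests, then every cut of `H` has at least
`min(k, cut size in G)` crossing edges; in particular `G` is `k`-edge-connected iff
`H` is. -/
theorem stmt_4 {V : Type*} [Fintype V] [DecidableEq V] [Nonempty V]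
    (G : SimpleGraph V) (k : ℕ) (hk : 1 ≤ k) (F : Fin k → SimpleGraph V)
    (hF : ∀ i : Fin k,
      IsSpanningForestOf (F i) (G \ (⨆ j : Fin k, ⨆ _ : j < i, F j)))
    (H : SimpleGraph V) (hH : H = ⨆ i, F i) :
    (∀ S : Finset V, min k (cutSize G S) ≤ cutSize H S) ∧
      (IsKEdgeConnected k G ↔ IsKEdgeConnected k H) :=
  stmt_4_general G k hk F hF H hH
end

section
/- Let G be a graph whose minimum cut has size at least λ > 0, and let α ≥ 1. Then the number of cuts (S, V\S) with ∅ ≠ S ⊊ V whose size is at most α·λ is at most (2n)^{2α}, where n is the number of vertices. In particular, if a graph H on n vertices is t-edge-connected, the number of subsets S (up to complementation) whose cut in H has size less than 2t is at most 16n⁴. -/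
open Finset
open scoped Classical

section KargerAux

variable {V : Type*} [Fintype V] [DecidableEq V]

lemma cutSize_compl (G : SimpleGraph V) (S : Finset V) : cutSize G Sᶜ = cutSize G S := by
  unfold cutSize
  rw [compl_compl]
  apply Finset.card_nbij' (fun p => (p.2, p.1)) (fun p => (p.2, p.1))
  · intro a ha
    simp only [Finset.mem_coe, Finset.mem_filter, Finset.mem_product, Finset.mem_compl] at ha ⊢
    exact ⟨⟨ha.1.2, ha.1.1⟩, ha.2.symm⟩
  · intro a ha
    simp only [Finset.mem_coe, Finset.mem_filter, Finset.mem_product, Finset.mem_compl] at ha ⊢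
    exact ⟨⟨ha.1.2, ha.1.1⟩, ha.2.symm⟩
  · intro a _; rfl
  · intro a _; rfl

/-- The sets `S` that are unions of parts of the partition (given by fibers of `c`),
are nonempty and proper, and have small cut. -/
noncomputable def smallCuts (G : SimpleGraph V) (lam : ℕ) (α : ℝ) (c : V → V) :
    Finset (Finset V) :=
  univ.filter fun S : Finset V =>
    (∀ u v : V, c u = c v → (u ∈ S ↔ v ∈ S)) ∧ S.Nonempty ∧ S ≠ univ ∧
      (cutSize G S : ℝ) ≤ α * lam

/-- Ordered pairs of adjacent vertices lying in different parts. -/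
noncomputable def cross (G : SimpleGraph V) (c : V → V) : Finset (V × V) :=
  (univ ×ˢ univ).filter fun p => G.Adj p.1 p.2 ∧ c p.1 ≠ c p.2

lemma cross_fiber_card (G : SimpleGraph V) (c : V → V) (w : V) :
    ((cross G c).filter fun p => c p.1 = w).card
      = cutSize G (univ.filter fun x => c x = w) := by
  unfold cross cutSize
  congr 1
  ext ⟨u, v⟩
  simp only [Finset.mem_filter, Finset.mem_product, Finset.mem_compl, Finset.mem_univ,
    true_and]
  constructor
  · rintro ⟨⟨hadj, hne⟩, hw⟩
    exact ⟨⟨hw, fun h => hne (hw.trans h.symm)⟩, hadj⟩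
  · rintro ⟨⟨hw, hv⟩, hadj⟩
    exact ⟨⟨hadj, fun h => hv (h ▸ hw)⟩, hw⟩

lemma cross_card_lower (G : SimpleGraph V) (lam : ℕ)
    (hmin : ∀ S : Finset V, S.Nonempty → S ≠ Finset.univ → lam ≤ cutSize G S)
    (c : V → V) (hb : 2 ≤ (univ.image c).card) :
    (univ.image c).card * lam ≤ (cross G c).card := by
  rw [Finset.card_eq_sum_card_fiberwise
    (f := fun p : V × V => c p.1) (t := univ.image c)
    (fun p _ => Finset.mem_image_of_mem _ (Finset.mem_univ _))]
  calc (univ.image c).card * lam = ∑ _w ∈ univ.image c, lam := by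
        rw [Finset.sum_const, smul_eq_mul]
    _ ≤ _ := by
        apply Finset.sum_le_sum
        intro w hw
        rw [cross_fiber_card]
        obtain ⟨x, _, hx⟩ := Finset.mem_image.1 hw
        obtain ⟨w', hw', hww'⟩ := Finset.exists_mem_ne (lt_of_lt_of_le one_lt_two hb) w
        obtain ⟨x', _, hx'⟩ := Finset.mem_image.1 hw'
        apply hmin
        · exact ⟨x, Finset.mem_filter.2 ⟨Finset.mem_univ _, hx⟩⟩
        · intro h
          have hx'' : x' ∈ univ.filter fun x => c x = w := by rw [h]; exact Finset.mem_univ x'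
          exact hww' (hx' ▸ (Finset.mem_filter.1 hx'').2)

lemma cross_cut_card (G : SimpleGraph V) (c : V → V) (S : Finset V)
    (hS : ∀ u v : V, c u = c v → (u ∈ S ↔ v ∈ S)) :
    ((cross G c).filter fun p => ¬(p.1 ∈ S ↔ p.2 ∈ S)).card = 2 * cutSize G S := by
  have hsplit : ((cross G c).filter fun p => ¬(p.1 ∈ S ↔ p.2 ∈ S))
      = ((univ ×ˢ univ).filter fun p : V × V => G.Adj p.1 p.2 ∧ p.1 ∈ S ∧ p.2 ∉ S)
        ∪ ((univ ×ˢ univ).filter fun p : V × V => G.Adj p.1 p.2 ∧ p.1 ∉ S ∧ p.2 ∈ S) := by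
    ext ⟨u, v⟩
    simp only [cross, Finset.mem_filter, Finset.mem_product, Finset.mem_univ, true_and,
      Finset.mem_union]
    constructor
    · rintro ⟨⟨hadj, _⟩, hne⟩
      by_cases hu : u ∈ S
      · exact Or.inl ⟨hadj, hu, fun hv => hne ⟨fun _ => hv, fun _ => hu⟩⟩
      · exact Or.inr ⟨hadj, hu, by tauto⟩
    · rintro (⟨hadj, hu, hv⟩ | ⟨hadj, hu, hv⟩)
      · exact ⟨⟨hadj, fun h => hv ((hS u v h).1 hu)⟩, by tauto⟩
      · exact ⟨⟨hadj, fun h => hu ((hS u v h).2 hv)⟩, by tauto⟩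
  have hdisj : Disjoint
      ((univ ×ˢ univ).filter fun p : V × V => G.Adj p.1 p.2 ∧ p.1 ∈ S ∧ p.2 ∉ S)
      ((univ ×ˢ univ).filter fun p : V × V => G.Adj p.1 p.2 ∧ p.1 ∉ S ∧ p.2 ∈ S) := by
    rw [Finset.disjoint_left]
    intro p hp hq
    rw [Finset.mem_filter] at hp hq
    exact absurd hp.2.2.1 hq.2.2.1
  rw [hsplit, Finset.card_union_of_disjoint hdisj]
  have h1 : ((univ ×ˢ univ).filter fun p : V × V => G.Adj p.1 p.2 ∧ p.1 ∈ S ∧ p.2 ∉ S).card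
      = cutSize G S := by
    unfold cutSize
    congr 1
    ext ⟨u, v⟩
    simp only [Finset.mem_filter, Finset.mem_product, Finset.mem_univ, Finset.mem_compl,
      true_and]
    tauto
  have h2 : ((univ ×ˢ univ).filter fun p : V × V => G.Adj p.1 p.2 ∧ p.1 ∉ S ∧ p.2 ∈ S).card
      = cutSize G Sᶜ := by
    unfold cutSize
    congr 1
    ext ⟨u, v⟩
    simp only [Finset.mem_filter, Finset.mem_product, Finset.mem_univ, Finset.mem_compl,
      compl_compl, true_and]
    tauto
  rw [h1, h2, cutSize_compl, two_mul]

end KargerAux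
section KargerAux2
variable {V : Type*} [Fintype V] [DecidableEq V]

lemma merge_smallCuts (G : SimpleGraph V) (lam : ℕ) (α : ℝ) (c : V → V) (e : V × V) :
    (smallCuts G lam α c).filter (fun S => e.1 ∈ S ↔ e.2 ∈ S)
      ⊆ smallCuts G lam α (fun x => if c x = c e.1 then c e.2 else c x) := by
  intro S hS
  rw [Finset.mem_filter] at hS
  obtain ⟨hS, hes⟩ := hS
  unfold smallCuts at hS ⊢
  rw [Finset.mem_filter] at hS ⊢
  obtain ⟨_, hun, rest⟩ := hS
  refine ⟨Finset.mem_univ _, ?_, rest⟩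
  intro u v huv
  simp only at huv
  by_cases hu : c u = c e.1 <;> by_cases hv : c v = c e.1
  · exact hun u v (hu.trans hv.symm)
  · rw [if_pos hu, if_neg hv] at huv
    exact ((hun u e.1 hu).trans hes).trans (hun e.2 v huv)
  · rw [if_neg hu, if_pos hv] at huv
    exact ((hun u e.2 huv).trans hes.symm).trans (hun e.1 v hv.symm)
  · rw [if_neg hu, if_neg hv] at huv
    exact hun u v huv

lemma merge_image_lt (c : V → V) (e : V × V) (hne : c e.1 ≠ c e.2) :
    (univ.image fun x => if c x = c e.1 then c e.2 else c x).card
      < (univ.image c).card := by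
  have hsub : (univ.image fun x => if c x = c e.1 then c e.2 else c x)
      ⊆ (univ.image c).erase (c e.1) := by
    intro w hw
    obtain ⟨x, -, hx⟩ := Finset.mem_image.1 hw
    by_cases h : c x = c e.1
    · rw [if_pos h] at hx
      exact Finset.mem_erase.2 ⟨hx ▸ Ne.symm hne,
        hx ▸ Finset.mem_image_of_mem c (Finset.mem_univ e.2)⟩
    · rw [if_neg h] at hx
      exact Finset.mem_erase.2 ⟨hx ▸ h, hx ▸ Finset.mem_image_of_mem c (Finset.mem_univ x)⟩
  exact lt_of_le_of_lt (Finset.card_le_card hsub)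
    (Finset.card_erase_lt_of_mem (Finset.mem_image_of_mem c (Finset.mem_univ e.1)))

lemma sum_card_filter_comm {ι κ : Type*} (A : Finset ι) (B : Finset κ) (P : ι → κ → Prop)
    [∀ e S, Decidable (P e S)] :
    ∑ e ∈ A, (B.filter fun S => P e S).card
      = ∑ S ∈ B, (A.filter fun e => P e S).card := by
  simp_rw [Finset.card_filter]
  rw [Finset.sum_comm]

end KargerAux2

section FFsec

noncomputable def FF (α : ℝ) (b : ℕ) : ℝ :=
  2 ^ (⌈2*α⌉₊) * ∏ k ∈ Finset.Ioc (⌈2*α⌉₊) b, (k : ℝ) / ((k : ℝ) - 2*α)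

variable {α : ℝ} (hα : 1 ≤ α)

lemma ceil_ge (hα : 1 ≤ α) : (2:ℝ)*α ≤ (⌈2*α⌉₊ : ℝ) := Nat.le_ceil _

lemma two_le_ceil (hα : 1 ≤ α) : 2 ≤ ⌈2*α⌉₊ := by
  have : (1:ℝ) < 2*α := by linarith
  exact Nat.lt_ceil.2 (by exact_mod_cast this)

lemma FF_denom_pos (hα : 1 ≤ α) {k : ℕ} (hk : ⌈2*α⌉₊ < k) : 0 < (k : ℝ) - 2*α := by
  have h1 : ((⌈2*α⌉₊ : ℕ) : ℝ) < (k : ℝ) := by exact_mod_cast hk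
  have := ceil_ge hα
  linarith

lemma FF_factor_one_le (hα : 1 ≤ α) {k : ℕ} (hk : ⌈2*α⌉₊ < k) :
    1 ≤ (k : ℝ) / ((k : ℝ) - 2*α) := by
  rw [le_div_iff₀ (FF_denom_pos hα hk)]
  have : (0:ℝ) ≤ 2*α := by linarith
  linarith

lemma FF_prod_pos (hα : 1 ≤ α) (a b : ℕ) (ha : ⌈2*α⌉₊ ≤ a) :
    0 < ∏ k ∈ Finset.Ioc a b, (k : ℝ) / ((k : ℝ) - 2*α) := by
  apply Finset.prod_pos
  intro k hk
  have hk' : ⌈2*α⌉₊ < k := lt_of_le_of_lt ha (Finset.mem_Ioc.1 hk).1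
  have hk0 : 0 < k := lt_of_le_of_lt (Nat.zero_le _) hk'
  exact div_pos (by exact_mod_cast hk0) (FF_denom_pos hα hk')

lemma one_le_FF_prod (hα : 1 ≤ α) {a b : ℕ} (ha : ⌈2*α⌉₊ ≤ a) :
    1 ≤ ∏ k ∈ Finset.Ioc a b, (k : ℝ) / ((k : ℝ) - 2*α) := by
  calc (1:ℝ) = ∏ _k ∈ Finset.Ioc a b, 1 := Finset.prod_const_one.symm
  _ ≤ _ := Finset.prod_le_prod (by intros; norm_num)
      (fun k hk => FF_factor_one_le hα (lt_of_le_of_lt ha (Finset.mem_Ioc.1 hk).1))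

lemma FF_pos (hα : 1 ≤ α) (b : ℕ) : 0 < FF α b :=
  mul_pos (by positivity) (lt_of_lt_of_le one_pos (one_le_FF_prod hα le_rfl))

lemma FF_mono (hα : 1 ≤ α) {b b' : ℕ} (h : b ≤ b') : FF α b ≤ FF α b' := by
  unfold FF
  by_cases hrb : ⌈2*α⌉₊ ≤ b
  · rw [← Finset.prod_Ioc_consecutive _ hrb h, ← mul_assoc]
    exact le_mul_of_one_le_right
      (mul_nonneg (by positivity) (FF_prod_pos hα _ _ le_rfl).le)
      (one_le_FF_prod hα hrb)
  · rw [Finset.Ioc_eq_empty (fun hlt => hrb (le_of_lt hlt)), Finset.prod_empty, mul_one]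
    exact le_mul_of_one_le_right (by positivity) (one_le_FF_prod hα le_rfl)

lemma FF_succ (hα : 1 ≤ α) {b : ℕ} (hb : ⌈2*α⌉₊ ≤ b) :
    FF α (b+1) = FF α b * (((b:ℝ)+1) / (((b:ℝ)+1) - 2*α)) := by
  unfold FF
  rw [Finset.prod_Ioc_succ_top hb, ← mul_assoc]
  push_cast
  ring

end FFsec
section KargerMain
variable {V : Type*} [Fintype V] [DecidableEq V]

lemma smallCuts_card_le_pow (G : SimpleGraph V) (lam : ℕ) (α : ℝ) (c : V → V) :
    (smallCuts G lam α c).card ≤ 2 ^ (univ.image c).card := by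
  have hkey : ∀ S ∈ smallCuts G lam α c, S = univ.filter (fun x => c x ∈ S.image c) := by
    intro S hS
    rw [smallCuts, Finset.mem_filter] at hS
    obtain ⟨-, hun, -⟩ := hS
    ext x
    simp only [Finset.mem_filter, Finset.mem_univ, true_and, Finset.mem_image]
    constructor
    · intro hx; exact ⟨x, hx, rfl⟩
    · rintro ⟨y, hy, hyx⟩; exact (hun y x hyx).1 hy
  calc (smallCuts G lam α c).card ≤ ((univ.image c).powerset).card := by
        apply Finset.card_le_card_of_injOn (fun S => S.image c)
        · intro S _
          exact Finset.mem_powerset.2 (Finset.image_subset_image (Finset.subset_univ S))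
        · intro S1 h1 S2 h2 heq
          have heq' : S1.image c = S2.image c := heq
          rw [hkey S1 (Finset.mem_coe.1 h1), hkey S2 (Finset.mem_coe.1 h2), heq']
    _ = 2 ^ (univ.image c).card := Finset.card_powerset _

lemma karger_main (G : SimpleGraph V) (lam : ℕ) (α : ℝ) (hlam : 0 < lam)
    (hmin : ∀ S : Finset V, S.Nonempty → S ≠ Finset.univ → lam ≤ cutSize G S)
    (hα : 1 ≤ α) :
    ∀ b : ℕ, ∀ c : V → V, (univ.image c).card = b →
      ((smallCuts G lam α c).card : ℝ) ≤ FF α b := by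
  intro b
  induction b using Nat.strong_induction_on with
  | _ b ih =>
    intro c hc
    by_cases hbr : b ≤ ⌈2*α⌉₊
    · calc ((smallCuts G lam α c).card : ℝ) ≤ (2:ℝ) ^ b := by
            exact_mod_cast hc ▸ smallCuts_card_le_pow G lam α c
        _ ≤ (2:ℝ) ^ (⌈2*α⌉₊) := pow_le_pow_right₀ (by norm_num) hbr
        _ ≤ FF α b := le_mul_of_one_le_right (by positivity) (one_le_FF_prod hα le_rfl)
    · push_neg at hbr
      obtain ⟨b', rfl⟩ : ∃ k, b = k + 1 :=
        ⟨b - 1, (Nat.succ_pred_eq_of_pos (lt_of_le_of_lt (Nat.zero_le _) hbr)).symm⟩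
      have hrb' : ⌈2*α⌉₊ ≤ b' := Nat.lt_succ_iff.1 hbr
      have hb2 : 2 ≤ b' + 1 := le_trans (two_le_ceil hα) (le_of_lt hbr)
      set B := smallCuts G lam α c with hB
      set A := cross G c with hA
      set N := B.card with hN
      set M := A.card with hM
      -- lower bound on M
      have hMlow : ((b':ℝ) + 1) * lam ≤ (M : ℝ) := by
        have := cross_card_lower G lam hmin c (hc ▸ hb2)
        rw [hc] at this
        exact_mod_cast this
      have hlamR : (0:ℝ) < (lam : ℝ) := by exact_mod_cast hlam
      -- per-cut lower bound on surviving pairs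
      have step1 : ∀ S ∈ B, ((M:ℝ) - 2*(α*lam))
          ≤ ((A.filter fun e : V × V => e.1 ∈ S ↔ e.2 ∈ S).card : ℝ) := by
        intro S hS
        have hS' := hS
        rw [hB, smallCuts, Finset.mem_filter] at hS'
        obtain ⟨-, hun, -, -, hsize⟩ := hS'
        have hcc := cross_cut_card G c S hun
        have hsplit := Finset.card_filter_add_card_filter_not
          (s := A) (p := fun e : V × V => e.1 ∈ S ↔ e.2 ∈ S)
        rw [hcc] at hsplit
        have : ((A.filter fun e : V × V => e.1 ∈ S ↔ e.2 ∈ S).card : ℝ)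
            = (M:ℝ) - 2*(cutSize G S : ℝ) := by
          rw [hM, ← hsplit]; push_cast; ring
        rw [this]
        nlinarith [hsize]
      -- per-pair upper bound via contraction
      have step2 : ∀ e ∈ A, ((B.filter fun S => e.1 ∈ S ↔ e.2 ∈ S).card : ℝ)
          ≤ FF α b' := by
        intro e he
        have hne : c e.1 ≠ c e.2 := by
          rw [hA, cross, Finset.mem_filter] at he
          exact he.2.2
        set c' : V → V := fun x => if c x = c e.1 then c e.2 else c x with hc'
        have hlt : (univ.image c').card < b' + 1 := hc ▸ merge_image_lt c e hne
        calc ((B.filter fun S => e.1 ∈ S ↔ e.2 ∈ S).card : ℝ)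
            ≤ ((smallCuts G lam α c').card : ℝ) := by
              exact_mod_cast Finset.card_le_card (merge_smallCuts G lam α c e)
          _ ≤ FF α ((univ.image c').card) := ih _ hlt c' rfl
          _ ≤ FF α b' := FF_mono hα (Nat.lt_succ_iff.1 hlt)
      -- double counting
      have hcount := sum_card_filter_comm A B (fun (e : V × V) S => e.1 ∈ S ↔ e.2 ∈ S)
      have keyIneq : (N:ℝ) * ((M:ℝ) - 2*(α*lam)) ≤ (M:ℝ) * FF α b' := by
        have hlow : (N:ℝ) * ((M:ℝ) - 2*(α*lam))
            ≤ ∑ S ∈ B, ((A.filter fun e : V × V => e.1 ∈ S ↔ e.2 ∈ S).card : ℝ) := by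
          have := Finset.card_nsmul_le_sum B
            (fun S => ((A.filter fun e : V × V => e.1 ∈ S ↔ e.2 ∈ S).card : ℝ))
            ((M:ℝ) - 2*(α*lam)) step1
          rwa [nsmul_eq_mul] at this
        have hhigh : ∑ e ∈ A, ((B.filter fun S => e.1 ∈ S ↔ e.2 ∈ S).card : ℝ)
            ≤ (M:ℝ) * FF α b' := by
          have := Finset.sum_le_card_nsmul A
            (fun e : V × V => ((B.filter fun S => e.1 ∈ S ↔ e.2 ∈ S).card : ℝ))
            (FF α b') step2
          rwa [nsmul_eq_mul] at this
        have hmid : ∑ S ∈ B, ((A.filter fun e : V × V => e.1 ∈ S ↔ e.2 ∈ S).card : ℝ)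
            = ∑ e ∈ A, ((B.filter fun S => e.1 ∈ S ↔ e.2 ∈ S).card : ℝ) := by
          exact_mod_cast congrArg (Nat.cast : ℕ → ℝ) hcount.symm
        linarith
      -- conclude
      have hbβ : (0:ℝ) < ((b':ℝ) + 1) - 2*α := by
        have h1 : (2:ℝ)*α ≤ (⌈2*α⌉₊ : ℝ) := ceil_ge hα
        have h2 : ((⌈2*α⌉₊ : ℕ) : ℝ) ≤ (b' : ℝ) := by exact_mod_cast hrb'
        linarith
      rw [FF_succ hα hrb']
      have hFpos := FF_pos hα b'
      by_cases hNF : (N:ℝ) ≤ FF α b'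
      · calc (N:ℝ) ≤ FF α b' := hNF
          _ = FF α b' * 1 := (mul_one _).symm
          _ ≤ FF α b' * (((b':ℝ)+1) / (((b':ℝ)+1) - 2*α)) := by
              apply mul_le_mul_of_nonneg_left _ hFpos.le
              exact FF_factor_one_le hα (k := b' + 1) hbr |>.trans_eq' (by push_cast; ring) |>.trans_eq (by push_cast; ring)
      · push_neg at hNF
        rw [mul_div_assoc', le_div_iff₀ hbβ]
        nlinarith [keyIneq, hMlow, hlamR,
          mul_nonneg (sub_nonneg.2 hNF.le) (sub_nonneg.2 hMlow)]

end KargerMain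
section KargerAnalytic

variable {α : ℝ}

lemma bernoulli_rpow_le {δ x : ℝ} (hδ0 : 0 ≤ δ) (hδ1 : δ ≤ 1) (hx : 0 ≤ x) :
    (1 + x) ^ δ ≤ 1 + δ * x := by
  have h := Real.geom_mean_le_arith_mean2_weighted (w₁ := 1 - δ) (w₂ := δ)
    (p₁ := 1) (p₂ := 1 + x) (by linarith) hδ0 (by norm_num) (by linarith) (by ring)
  rw [Real.one_rpow, one_mul] at h
  nlinarith [h]

lemma ceil_lt (hα : 1 ≤ α) : ((⌈2*α⌉₊ : ℕ) : ℝ) < 2*α + 1 :=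
  Nat.ceil_lt_add_one (by linarith)

lemma FF_prod_claim (hα : 1 ≤ α) (n : ℕ) (hn : ⌈2*α⌉₊ ≤ n) :
    (∏ k ∈ Finset.Ioc ⌈2*α⌉₊ n, (k:ℝ)/((k:ℝ)-2*α)) * ((Nat.factorial ⌈2*α⌉₊) : ℝ)
        * (((n:ℝ) - (⌈2*α⌉₊ : ℕ) + 1) ^ (((⌈2*α⌉₊ : ℕ):ℝ) - 2*α))
      ≤ (n.descFactorial ⌈2*α⌉₊ : ℝ) := by
  set r := ⌈2*α⌉₊ with hr
  have hδ0 : (0:ℝ) ≤ (r:ℝ) - 2*α := by have := ceil_ge hα; linarith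
  have hδ1 : (r:ℝ) - 2*α ≤ 1 := by have := ceil_lt hα; linarith
  induction n, hn using Nat.le_induction with
  | base =>
      rw [Finset.Ioc_self, Finset.prod_empty, one_mul, sub_self, zero_add, Real.one_rpow,
        mul_one, Nat.descFactorial_self]
  | succ n hn ihn =>
      set δ : ℝ := (r:ℝ) - 2*α with hδ
      set m1 : ℝ := (n:ℝ) - (r:ℕ) + 1 with hm1
      set D0 : ℝ := (n.descFactorial r : ℝ) with hD0
      set D1 : ℝ := ((n+1).descFactorial r : ℝ) with hD1
      have hrn : ((r:ℕ) : ℝ) ≤ (n : ℝ) := by exact_mod_cast hn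
      have hm1pos : 0 < m1 := by rw [hm1]; linarith
      have hprod : (∏ k ∈ Finset.Ioc r (n+1), (k:ℝ)/((k:ℝ)-2*α))
          = (∏ k ∈ Finset.Ioc r n, (k:ℝ)/((k:ℝ)-2*α)) * (((n:ℝ)+1)/(((n:ℝ)+1)-2*α)) := by
        rw [Finset.prod_Ioc_succ_top hn]
        push_cast
        ring
      have hnb : (0:ℝ) < ((n:ℝ)+1) - 2*α := by
        have := ceil_ge hα; linarith
      have hD : m1 * D1 = ((n:ℝ)+1) * D0 := by
        have h := Nat.succ_descFactorial n r
        have hcast : ((n + 1 - r : ℕ) : ℝ) = m1 := by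
          rw [Nat.cast_sub (le_trans hn (Nat.le_succ n)), hm1]
          push_cast; ring
        calc m1 * D1
            = ((n + 1 - r : ℕ) : ℝ) * ((n+1).descFactorial r : ℝ) := by rw [hcast]
          _ = (((n + 1 - r) * (n+1).descFactorial r : ℕ) : ℝ) := by push_cast; ring
          _ = (((n + 1) * n.descFactorial r : ℕ) : ℝ) := by rw [h]
          _ = ((n:ℝ)+1) * D0 := by push_cast; ring
      have key2 : (m1+1)^δ * m1 ≤ m1^δ * (((n:ℝ)+1) - 2*α) := by
        have h1 : m1 + 1 = m1 * (1 + 1/m1) := by field_simp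
        have h2 : (m1+1)^δ = m1^δ * (1 + 1/m1)^δ := by
          rw [h1, Real.mul_rpow hm1pos.le (by positivity)]
        have h3 : (1 + 1/m1)^δ ≤ 1 + δ * (1/m1) :=
          bernoulli_rpow_le hδ0 hδ1 (by positivity)
        have h4 : m1^δ * (1 + δ * (1/m1)) * m1 = m1^δ * (m1 + δ) := by
          field_simp
        have h5 : m1 + δ = ((n:ℝ)+1) - 2*α := by rw [hm1, hδ]; ring
        calc (m1+1)^δ * m1 = m1^δ * (1 + 1/m1)^δ * m1 := by rw [h2]
          _ ≤ m1^δ * (1 + δ * (1/m1)) * m1 :=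
              mul_le_mul_of_nonneg_right
                (mul_le_mul_of_nonneg_left h3 (Real.rpow_pos_of_pos hm1pos δ).le) hm1pos.le
          _ = m1^δ * (m1 + δ) := h4
          _ = m1^δ * (((n:ℝ)+1) - 2*α) := by rw [h5]
      set P : ℝ := ∏ k ∈ Finset.Ioc r n, (k:ℝ)/((k:ℝ)-2*α) with hP
      set F : ℝ := ((Nat.factorial r) : ℝ) with hF
      have hPpos : 0 < P := FF_prod_pos hα r n le_rfl
      have hFpos : 0 < F := by rw [hF]; exact_mod_cast Nat.factorial_pos r
      have hmδpos : 0 < m1^δ := Real.rpow_pos_of_pos hm1pos δ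
      have hbase : ((n+1:ℕ):ℝ) - (r:ℕ) + 1 = m1 + 1 := by
        rw [hm1]; push_cast; ring
      rw [hprod, hbase]
      have main : P * (((n:ℝ)+1)/(((n:ℝ)+1)-2*α)) * F * (m1+1)^δ ≤ D1 := by
        rw [show P * (((n:ℝ)+1)/(((n:ℝ)+1)-2*α)) * F * (m1+1)^δ
            = (P * F * (m1+1)^δ * ((n:ℝ)+1))/(((n:ℝ)+1)-2*α) by ring]
        rw [div_le_iff₀ hnb, ← mul_le_mul_iff_of_pos_right hm1pos]
        calc P*F*(m1+1)^δ*((n:ℝ)+1)*m1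
            = (P*F*((n:ℝ)+1)) * ((m1+1)^δ * m1) := by ring
          _ ≤ (P*F*((n:ℝ)+1)) * (m1^δ * (((n:ℝ)+1)-2*α)) :=
              mul_le_mul_of_nonneg_left key2 (by positivity)
          _ = (P*F*m1^δ) * (((n:ℝ)+1)*(((n:ℝ)+1)-2*α)) := by ring
          _ ≤ D0 * (((n:ℝ)+1)*(((n:ℝ)+1)-2*α)) :=
              mul_le_mul_of_nonneg_right ihn (by positivity)
          _ = D1*(((n:ℝ)+1)-2*α)*m1 := by linear_combination (-(((n:ℝ)+1)-2*α)) * hD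
      exact main

end KargerAnalytic
section KargerFinal

variable {α : ℝ}

lemma FF_le (hα : 1 ≤ α) (n : ℕ) (hn : (4:ℝ)*α < (n:ℝ)) :
    FF α n ≤ (2*(n:ℝ)) ^ (2*α) := by
  unfold FF
  set r := ⌈2*α⌉₊ with hr
  have h2α : (2:ℝ)*α ≤ (r:ℝ) := ceil_ge hα
  have hrlt : (r:ℝ) < 2*α+1 := ceil_lt hα
  have hr2 : 2 ≤ r := two_le_ceil hα
  have hr2R : (2:ℝ) ≤ (r:ℝ) := by exact_mod_cast hr2
  have hα0 : (0:ℝ) < α := by linarith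
  have hnr2 : 2*(r:ℝ) - 2 < (n:ℝ) := by linarith
  have hrnR : (r:ℝ) < (n:ℝ) := by linarith
  have hrn : r ≤ n := le_of_lt (by exact_mod_cast hrnR)
  have hnpos : (0:ℝ) < (n:ℝ) := by linarith
  set δ : ℝ := (r:ℝ) - 2*α with hδ
  have hδ0 : 0 ≤ δ := by rw [hδ]; linarith
  have hδ1 : δ ≤ 1 := by rw [hδ]; linarith
  set m1 : ℝ := (n:ℝ) - (r:ℕ) + 1 with hm1
  have hm1pos : 0 < m1 := by rw [hm1]; push_cast; linarith
  have claim := FF_prod_claim hα n hrn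
  set P : ℝ := ∏ k ∈ Finset.Ioc r n, (k:ℝ)/((k:ℝ)-2*α) with hP
  set F : ℝ := ((Nat.factorial r) : ℝ) with hF
  set D : ℝ := (n.descFactorial r : ℝ) with hD
  have hPpos : 0 < P := FF_prod_pos hα r n le_rfl
  have hFpos : 0 < F := by rw [hF]; exact_mod_cast Nat.factorial_pos r
  have hmδpos : 0 < m1^δ := Real.rpow_pos_of_pos hm1pos δ
  have hDpos : 0 < D := by
    rw [hD]
    have : n.descFactorial r ≠ 0 := fun h =>
      absurd (Nat.descFactorial_eq_zero_iff_lt.1 h) (not_lt.2 hrn)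
    exact_mod_cast Nat.pos_of_ne_zero this
  have h2n : (0:ℝ) < 2*(n:ℝ) := by linarith
  have hsplit : (2*(n:ℝ))^(2*α) = (2*(n:ℝ))^(r:ℕ) / (2*(n:ℝ))^δ := by
    rw [← Real.rpow_natCast (2*(n:ℝ)) r, ← Real.rpow_sub h2n]
    congr 1
    rw [hδ]; ring
  have hP_le : P ≤ D / (F * m1^δ) := by
    rw [le_div_iff₀ (by positivity)]
    calc P * (F * m1^δ) = P * F * m1^δ := by ring
      _ ≤ D := claim
  have hD_le : D ≤ (n:ℝ)^r := by
    rw [hD]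
    exact_mod_cast Nat.descFactorial_le_pow n r
  have h2nδ : (2*(n:ℝ))^δ ≤ F * m1^δ := by
    have hsplit4 : (2*(n:ℝ))^δ = (4:ℝ)^δ * ((n:ℝ)/2)^δ := by
      rw [← Real.mul_rpow (by norm_num) (by positivity)]
      congr 1
      ring
    have h4δ : (4:ℝ)^δ ≤ F := by
      rcases eq_or_lt_of_le hδ0 with h0 | h0
      · rw [← h0, Real.rpow_zero, hF]
        exact_mod_cast Nat.one_le_iff_ne_zero.2 (Nat.factorial_pos r).ne'
      · have hr3 : 3 ≤ r := by
          have h2r : (2:ℝ) < (r:ℝ) := by rw [hδ] at h0; linarith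
          exact_mod_cast Nat.succ_le_of_lt (by exact_mod_cast h2r : (2:ℕ) < r)
        have h44 : (4:ℝ)^δ ≤ 4 := by
          calc (4:ℝ)^δ ≤ (4:ℝ)^(1:ℝ) :=
                Real.rpow_le_rpow_of_exponent_le (by norm_num) hδ1
            _ = 4 := Real.rpow_one 4
        have hF6 : (6:ℝ) ≤ F := by
          rw [hF]
          have := Nat.factorial_le hr3
          norm_num at this ⊢
          exact_mod_cast this
        linarith
    have hhalf : ((n:ℝ)/2)^δ ≤ m1^δ := by
      apply Real.rpow_le_rpow (by positivity) _ hδ0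
      rw [hm1]; push_cast; linarith
    calc (2*(n:ℝ))^δ = (4:ℝ)^δ * ((n:ℝ)/2)^δ := hsplit4
      _ ≤ F * m1^δ := mul_le_mul h4δ hhalf (by positivity) hFpos.le
  calc (2:ℝ)^r * P ≤ (2:ℝ)^r * (D/(F*m1^δ)) :=
        mul_le_mul_of_nonneg_left hP_le (by positivity)
    _ = ((2:ℝ)^r * D)/(F*m1^δ) := by ring
    _ ≤ (2*(n:ℝ))^(r:ℕ) / (2*(n:ℝ))^δ := by
        rw [div_le_div_iff₀ (by positivity) (by positivity)]
        calc ((2:ℝ)^r * D) * (2*(n:ℝ))^δ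
            ≤ ((2:ℝ)^r * (n:ℝ)^r) * (F * m1^δ) := by
              apply mul_le_mul _ h2nδ (by positivity) (by positivity)
              exact mul_le_mul_of_nonneg_left hD_le (by positivity)
          _ = (2*(n:ℝ))^(r:ℕ) * (F * m1^δ) := by rw [mul_pow]
    _ = (2*(n:ℝ))^(2*α) := hsplit.symm

end KargerFinal
section KargerMaster

variable {V : Type*} [Fintype V] [DecidableEq V]

lemma karger_master (G : SimpleGraph V) (lam : ℕ) (hlam : 0 < lam)
    (hmin : ∀ S : Finset V, S.Nonempty → S ≠ Finset.univ → lam ≤ cutSize G S)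
    (α : ℝ) (hα : 1 ≤ α) :
    (((Finset.univ.filter fun S : Finset V =>
          S.Nonempty ∧ S ≠ Finset.univ ∧ (cutSize G S : ℝ) ≤ α * lam).card : ℝ))
      ≤ (2 * (Fintype.card V : ℝ)) ^ (2 * α) := by
  set n := Fintype.card V with hn
  have hsub : (Finset.univ.filter fun S : Finset V =>
      S.Nonempty ∧ S ≠ Finset.univ ∧ (cutSize G S : ℝ) ≤ α * lam)
      ⊆ smallCuts G lam α id := by
    intro S hS
    rw [Finset.mem_filter] at hS
    rw [smallCuts, Finset.mem_filter]
    exact ⟨Finset.mem_univ _, fun u v h => by rw [show u = v from h], hS.2⟩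
  have himg : (univ.image (id : V → V)).card = n := by
    rw [Finset.image_id, Finset.card_univ]
  by_cases hn4 : (4:ℝ)*α < (n:ℝ)
  · calc (((Finset.univ.filter fun S : Finset V =>
          S.Nonempty ∧ S ≠ Finset.univ ∧ (cutSize G S : ℝ) ≤ α * lam).card : ℝ))
        ≤ ((smallCuts G lam α id).card : ℝ) := by
          exact_mod_cast Finset.card_le_card hsub
      _ ≤ FF α n := karger_main G lam α hlam hmin hα n id himg
      _ ≤ (2*(n:ℝ)) ^ (2*α) := FF_le hα n hn4
  · push_neg at hn4
    by_cases hn1 : n ≤ 1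
    · have hempty : (Finset.univ.filter fun S : Finset V =>
          S.Nonempty ∧ S ≠ Finset.univ ∧ (cutSize G S : ℝ) ≤ α * lam) = ∅ := by
        apply Finset.eq_empty_of_forall_notMem
        intro S hS
        rw [Finset.mem_filter] at hS
        obtain ⟨-, hne, hnu, -⟩ := hS
        have h1 : 1 ≤ S.card := Finset.card_pos.2 hne
        have h2 : S.card < (Finset.univ : Finset V).card :=
          Finset.card_lt_card (Finset.ssubset_univ_iff.2 hnu)
        rw [Finset.card_univ, ← hn] at h2
        omega
      rw [hempty]
      simp only [Finset.card_empty, Nat.cast_zero]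
      positivity
    · push_neg at hn1
      have hn2 : 2 ≤ n := hn1
      have hn2R : (2:ℝ) ≤ (n:ℝ) := by exact_mod_cast hn2
      calc (((Finset.univ.filter fun S : Finset V =>
            S.Nonempty ∧ S ≠ Finset.univ ∧ (cutSize G S : ℝ) ≤ α * lam).card : ℝ))
          ≤ (((Finset.univ : Finset (Finset V)).card : ℕ) : ℝ) := by
            exact_mod_cast Finset.card_filter_le _ _
        _ = (2:ℝ) ^ (n:ℕ) := by
            rw [Finset.card_univ, Fintype.card_finset, hn]
            push_cast
            ring
        _ = (2:ℝ) ^ ((n:ℕ):ℝ) := (Real.rpow_natCast 2 n).symm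
        _ ≤ (2:ℝ) ^ ((4:ℝ)*α) :=
            Real.rpow_le_rpow_of_exponent_le one_le_two hn4
        _ = (4:ℝ) ^ (2*α) := by
            rw [show (4:ℝ)*α = (2:ℝ)*(2*α) by ring, Real.rpow_mul (by norm_num)]
            norm_num
        _ ≤ (2*(n:ℝ)) ^ (2*α) := by
            apply Real.rpow_le_rpow (by norm_num) (by linarith) (by linarith)

end KargerMaster

/-- Karger's cut-counting bound: if every cut of `G` has size at least `λ > 0`, then
the number of cuts (subsets counted up to complementation) of size at most `α·λ` is at
most `(2n)^{2α}`.  In particular, a `t`-edge-connected graph `H` has at most `16 n⁴`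
cuts (up to complementation) of size less than `2t`. -/
theorem stmt_6 {V : Type*} [Fintype V] [DecidableEq V] (n : ℕ)
    (hn : Fintype.card V = n)
    (G : SimpleGraph V) (lam : ℕ) (hlam : 0 < lam)
    (hmin : ∀ S : Finset V, S.Nonempty → S ≠ Finset.univ → lam ≤ cutSize G S)
    (α : ℝ) (hα : 1 ≤ α)
    (H : SimpleGraph V) (t : ℕ) (ht : 1 ≤ t) (hH : IsKEdgeConnected t H) :
    ((((Finset.univ.filter fun S : Finset V =>
          S.Nonempty ∧ S ≠ Finset.univ ∧ (cutSize G S : ℝ) ≤ α * lam).image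
        fun S : Finset V => ({S, Sᶜ} : Finset (Finset V))).card : ℝ)
      ≤ (2 * n : ℝ) ^ (2 * α)) ∧
    (((Finset.univ.filter fun S : Finset V =>
          S.Nonempty ∧ S ≠ Finset.univ ∧ cutSize H S < 2 * t).image
        fun S : Finset V => ({S, Sᶜ} : Finset (Finset V))).card
      ≤ 16 * n ^ 4) := by
  subst hn
  constructor
  · calc ((((Finset.univ.filter fun S : Finset V =>
          S.Nonempty ∧ S ≠ Finset.univ ∧ (cutSize G S : ℝ) ≤ α * lam).image
        fun S : Finset V => ({S, Sᶜ} : Finset (Finset V))).card : ℝ))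
        ≤ (((Finset.univ.filter fun S : Finset V =>
          S.Nonempty ∧ S ≠ Finset.univ ∧ (cutSize G S : ℝ) ≤ α * lam).card : ℕ) : ℝ) := by
          exact_mod_cast Finset.card_image_le
      _ ≤ (2 * (Fintype.card V : ℝ)) ^ (2 * α) := karger_master G lam hlam hmin α hα
      _ = (2 * (Fintype.card V) : ℝ) ^ (2 * α) := by norm_num
  · have hmaster := karger_master H t (lt_of_lt_of_le one_pos ht) hH.2 2 one_le_two
    have hsub : (Finset.univ.filter fun S : Finset V =>
        S.Nonempty ∧ S ≠ Finset.univ ∧ cutSize H S < 2 * t)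
        ⊆ (Finset.univ.filter fun S : Finset V =>
        S.Nonempty ∧ S ≠ Finset.univ ∧ (cutSize H S : ℝ) ≤ 2 * t) := by
      intro S hS
      rw [Finset.mem_filter] at hS ⊢
      refine ⟨hS.1, hS.2.1, hS.2.2.1, ?_⟩
      have := hS.2.2.2
      have h2 : cutSize H S ≤ 2 * t := this.le
      exact_mod_cast h2
    have himg : ((Finset.univ.filter fun S : Finset V =>
        S.Nonempty ∧ S ≠ Finset.univ ∧ cutSize H S < 2 * t).image
        fun S : Finset V => ({S, Sᶜ} : Finset (Finset V))).card
        ≤ ((Finset.univ.filter fun S : Finset V =>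
        S.Nonempty ∧ S ≠ Finset.univ ∧ (cutSize H S : ℝ) ≤ 2 * t).card) :=
      le_trans (Finset.card_le_card (Finset.image_subset_image hsub)) Finset.card_image_le
    have hcast : ((2 * (Fintype.card V : ℝ)) ^ (2 * (2:ℝ)))
        = ((16 * (Fintype.card V)^4 : ℕ) : ℝ) := by
      rw [show (2 * (2:ℝ)) = ((4:ℕ):ℝ) by norm_num, Real.rpow_natCast]
      push_cast
      ring
    have := le_trans (by exact_mod_cast himg : (((Finset.univ.filter fun S : Finset V =>
        S.Nonempty ∧ S ≠ Finset.univ ∧ cutSize H S < 2 * t).image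
        fun S : Finset V => ({S, Sᶜ} : Finset (Finset V))).card : ℝ)
        ≤ (((Finset.univ.filter fun S : Finset V =>
        S.Nonempty ∧ S ≠ Finset.univ ∧ (cutSize H S : ℝ) ≤ 2 * t).card : ℕ) : ℝ)) hmaster
    rw [hcast] at this
    exact_mod_cast this
end
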